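/- arXiv:2104.00045 — 3 statements merged into one kernel-verified Lean document; each statement's English description precedes it below -/
import Mathlib

section
/- Define a function Realizable : ℕ → ℕ → Prop and assume: (AR) for all m, k ≥ 3, Realizable m (k−1) implies Realizable ((k+1)·m) k together with the existence of a pencil of m parallel lines enabling (AS): for all r with 1 ≤ r ≤ m, Realizable ((k−1)·(k+1)·m + r) k. Assume also that for some a, Realizable n (k−1) holds for all n ≥ a. Then Realizable n k holds for all n ≥ (k²−1)·max(a, k²−2). -/
/-- Write `n = c b m + r` with `0 ≤ r < c b`; the lower bound on `n` forces `a ≤ m` and `r ≤ m`,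
so `n` is either `b (c m)` (when `r = 0`) or `c (b m) + r` with `1 ≤ r ≤ m`. -/
theorem forall_le_of_replication {P Q : ℕ → Prop} {a b c : ℕ} (hb : 1 ≤ b) (hc : 1 ≤ c)
    (hrep : ∀ m, P m → Q (b * m) ∧ ∀ r, 1 ≤ r → r ≤ m → Q (c * (b * m) + r))
    (hP : ∀ n, a ≤ n → P n) :
    ∀ n, c * b * max a (c * b - 1) ≤ n → Q n := by
  intro n hn
  have hd : 0 < c * b := Nat.mul_pos hc hb
  set m := n / (c * b)
  set r := n % (c * b)
  have hn_eq : c * b * m + r = n := Nat.div_add_mod n (c * b)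
  have hm : max a (c * b - 1) ≤ m := (Nat.le_div_iff_mul_le hd).2 (by rwa [mul_comm])
  have ham : a ≤ m := le_of_max_le_left hm
  have hrm : r ≤ m := by have := Nat.mod_lt n hd; omega
  rcases Nat.eq_zero_or_pos r with hr | hr
  · have hcm : a ≤ c * m := ham.trans (Nat.le_mul_of_pos_left m hc)
    convert (hrep _ (hP _ hcm)).1 using 1
    rw [← hn_eq, hr]
    ring
  · convert (hrep m (hP m ham)).2 r hr hrm using 1
    rw [← hn_eq]
    ring

theorem stmt_9 (Realizable : ℕ → ℕ → Prop) (k a : ℕ) (hk : 3 ≤ k)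
    (hAR : ∀ m : ℕ, Realizable m (k - 1) →
      Realizable ((k + 1) * m) k ∧
        ∀ r : ℕ, 1 ≤ r → r ≤ m → Realizable ((k - 1) * ((k + 1) * m) + r) k)
    (ha : ∀ n : ℕ, a ≤ n → Realizable n (k - 1)) :
    ∀ n : ℕ, (k ^ 2 - 1) * max a (k ^ 2 - 2) ≤ n → Realizable n k := by
  have hsq : k ^ 2 - 1 = (k - 1) * (k + 1) := by
    rw [mul_comm, ← Nat.sq_sub_sq, one_pow]
  have hsq' : k ^ 2 - 2 = (k - 1) * (k + 1) - 1 := by omega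
  rw [hsq, hsq']
  exact forall_le_of_replication (by omega) (by omega) hAR ha
end

section
/- Let A be a line in the real affine plane and let α be an affine transformation of ℝ² fixing A pointwise (an axial affinity with axis A). If P is a point not on A with α(P) = P', and Q is another point not on A such that the line PQ meets A in a point F, then α(Q) lies on the line FP'; moreover the line through Q and α(Q) is parallel to the line through P and P'. -/
/-!
Write `F = (1 - t) P + t Q`. Since `α` is affine and fixes `F`, also `F = (1 - t) P' + t α(Q)`,
so `α(Q)` lies on the line `F P'`. Subtracting the two expressions, the displacements satisfy
`t (α(Q) - Q) = (t - 1) (P' - P)`, and `t ≠ 0, 1` because neither `P` nor `Q` lies on the axis.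
-/

open AffineMap

theorem smul_vsub_eq_of_lineMap_eq {k V P : Type*} [Ring k] [AddCommGroup V] [Module k V]
    [AddTorsor V P] {a b a' b' : P} {t : k} (h : lineMap a b t = lineMap a' b' t) :
    t • (b' -ᵥ b) = (t - 1) • (a' -ᵥ a) := by
  have h0 : lineMap (a' -ᵥ a) (b' -ᵥ b) t = (0 : V) := by
    rw [← lineMap_vsub_lineMap, h, vsub_self]
  rw [lineMap_apply_module] at h0
  rw [eq_neg_of_add_eq_zero_right h0, ← neg_smul, neg_sub]

section Field

variable {k V P : Type*} [Field k] [AddCommGroup V] [Module k V] [AddTorsor V P]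

theorem right_mem_affineSpan_pair_of_lineMap_eq {a b c : P} {t : k} (ht : t ≠ 0)
    (h : lineMap a b t = c) : b ∈ line[k, c, a] :=
  mem_affineSpan_pair_iff_exists_lineMap_rev_eq.2
    ⟨t⁻¹, by rw [← h, lineMap_lineMap_right, inv_mul_cancel₀ ht, lineMap_apply_one]⟩

theorem affineSpan_pair_parallel_of_smul_vsub_eq {p₁ p₂ q₁ q₂ : P} {a b : k} (ha : a ≠ 0)
    (hb : b ≠ 0) (h : a • (q₂ -ᵥ q₁) = b • (p₂ -ᵥ p₁)) :
    (line[k, q₁, q₂]).Parallel line[k, p₁, p₂] :=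
  AffineSubspace.affineSpan_pair_parallel_iff_exists_unit_smul.2
    ⟨Units.mk0 (a⁻¹ * b) (mul_ne_zero (inv_ne_zero ha) hb), by
      rw [Units.smul_mk0, mul_smul, ← h, inv_smul_smul₀ ha]⟩

end Field

theorem stmt_15_general (A : AffineSubspace ℝ (ℝ × ℝ))
    (α : (ℝ × ℝ) ≃ᵃ[ℝ] (ℝ × ℝ))
    (hfix : ∀ x : ℝ × ℝ, x ∈ A → α x = x)
    (P Q F P' : ℝ × ℝ)
    (hP : P ∉ A) (hQ : Q ∉ A)
    (hP' : P' = α P)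
    (hF : F ∈ A) (hFline : F ∈ affineSpan ℝ ({P, Q} : Set (ℝ × ℝ))) :
    α Q ∈ affineSpan ℝ ({F, P'} : Set (ℝ × ℝ)) ∧
      AffineSubspace.Parallel (affineSpan ℝ ({Q, α Q} : Set (ℝ × ℝ)))
        (affineSpan ℝ ({P, P'} : Set (ℝ × ℝ))) := by
  obtain ⟨t, rfl⟩ := mem_affineSpan_pair_iff_exists_lineMap_eq.1 hFline
  have ht0 : t ≠ 0 := by
    rintro rfl
    exact hP (by simpa using hF)
  have ht1 : t ≠ 1 := by
    rintro rfl
    exact hQ (by simpa using hF)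
  have hmap : lineMap P' (α Q) t = lineMap P Q t := by
    rw [hP', ← α.apply_lineMap, hfix _ hF]
  exact ⟨right_mem_affineSpan_pair_of_lineMap_eq ht0 hmap,
    affineSpan_pair_parallel_of_smul_vsub_eq ht0 (sub_ne_zero.2 ht1)
      (smul_vsub_eq_of_lineMap_eq hmap.symm)⟩

theorem stmt_15 (A : AffineSubspace ℝ (ℝ × ℝ))
    (hA : ∃ p v : ℝ × ℝ, v ≠ 0 ∧ A = affineSpan ℝ {p, p + v})
    (α : (ℝ × ℝ) ≃ᵃ[ℝ] (ℝ × ℝ))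
    (hfix : ∀ x : ℝ × ℝ, x ∈ A → α x = x)
    (hne : α ≠ AffineEquiv.refl ℝ (ℝ × ℝ))
    (P Q F P' : ℝ × ℝ)
    (hP : P ∉ A) (hQ : Q ∉ A) (hPQ : P ≠ Q)
    (hP' : P' = α P)
    (hF : F ∈ A) (hFline : F ∈ affineSpan ℝ ({P, Q} : Set (ℝ × ℝ))) :
    α Q ∈ affineSpan ℝ ({F, P'} : Set (ℝ × ℝ)) ∧
      AffineSubspace.Parallel (affineSpan ℝ ({Q, α Q} : Set (ℝ × ℝ)))
        (affineSpan ℝ ({P, P'} : Set (ℝ × ℝ))) :=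
  stmt_15_general A α hfix P Q F P' hP hQ hP' hF hFline
end

section
/- For every integer k ≥ 2 there exists an integer N such that for all n ≥ N there is a geometric (n_k) configuration, assuming: (i) for all n ≥ 3 there is an (n_2) configuration; (ii) affine replication: from any (m_{k−1}) configuration one obtains a ((k+1)m_k) configuration with a pencil of m parallel lines; (iii) affine switch: from any (m_k) configuration with a pencil of q parallel lines and any 1 ≤ r ≤ q one obtains a (((k−1)m + r)_k) configuration. -/
/-!
Induction on `k`. If every `m ≥ M` admits an `(m_k)` configuration, affine replication gives a
`((k+2)m_{k+1})` configuration with a pencil of `m` parallel lines, and affine switches with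
`1 ≤ r ≤ m` then realise every `n` in the band `(c m, (c+1) m]`, where `c = k(k+2) = (k+1)² - 1`.
Consecutive bands overlap as soon as `m ≥ c`, so together they cover every `n > c · max M c`.
-/

lemma exists_band_mem {c M n : ℕ} (hc : 0 < c) (hcM : c ≤ M) (hn : c * M < n) :
    ∃ m, M ≤ m ∧ c * m < n ∧ n ≤ (c + 1) * m := by
  refine ⟨(n - 1) / c, ?_, ?_, ?_⟩
  · rw [Nat.le_div_iff_mul_le hc, mul_comm]
    omega
  · have := Nat.mul_div_le (n - 1) c
    omega
  · have hlt := Nat.lt_mul_div_succ (n - 1) hc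
    have hcm : c ≤ (n - 1) / c := by
      rw [Nat.le_div_iff_mul_le hc]
      have := Nat.mul_le_mul_left c hcM
      omega
    rw [mul_add, mul_one] at hlt
    rw [add_mul, one_mul]
    omega

section Configurations

variable {R : ℕ → ℕ → ℕ → Prop}

lemma exists_succ_of_mem_band
    (hAR : ∀ m k q : ℕ, 3 ≤ k → R m (k - 1) q → R ((k + 1) * m) k m)
    (hAS : ∀ m k q r : ℕ, R m k q → 1 ≤ r → r ≤ q → ∃ q' : ℕ, R ((k - 1) * m + r) k q')
    {k m q n : ℕ} (hk : 2 ≤ k) (hR : R m k q)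
    (hlo : k * (k + 2) * m < n) (hhi : n ≤ (k * (k + 2) + 1) * m) :
    ∃ q', R n (k + 1) q' := by
  have hrep : R ((k + 2) * m) (k + 1) m := hAR m (k + 1) q (by omega) (by simpa using hR)
  obtain ⟨q', hq'⟩ :=
    hAS _ _ _ (n - k * (k + 2) * m) hrep (by omega) (by rw [add_mul] at hhi; omega)
  have hn : (k + 1 - 1) * ((k + 2) * m) + (n - k * (k + 2) * m) = n := by
    rw [Nat.add_sub_cancel, ← mul_assoc]
    omega
  exact ⟨q', hn ▸ hq'⟩

lemma exists_forall_ge_succ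
    (hAR : ∀ m k q : ℕ, 3 ≤ k → R m (k - 1) q → R ((k + 1) * m) k m)
    (hAS : ∀ m k q r : ℕ, R m k q → 1 ≤ r → r ≤ q → ∃ q' : ℕ, R ((k - 1) * m + r) k q')
    {k M : ℕ} (hk : 2 ≤ k) (hM : ∀ m, M ≤ m → ∃ q, R m k q) :
    ∃ N, ∀ n, N ≤ n → ∃ q, R n (k + 1) q := by
  set c := k * (k + 2)
  have hc : 0 < c := by positivity
  refine ⟨c * max M c + 1, fun n hn => ?_⟩
  obtain ⟨m, hMm, hlo, hhi⟩ := exists_band_mem hc (le_max_right M c) (by omega : c * max M c < n)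
  obtain ⟨q, hq⟩ := hM m (le_of_max_le_left hMm)
  exact exists_succ_of_mem_band hAR hAS hk hq hlo hhi

end Configurations

theorem stmt_18 (R : ℕ → ℕ → ℕ → Prop)
    (h2 : ∀ n : ℕ, 3 ≤ n → ∃ q : ℕ, R n 2 q)
    (hAR : ∀ m k q : ℕ, 3 ≤ k → R m (k - 1) q → R ((k + 1) * m) k m)
    (hAS : ∀ m k q r : ℕ, R m k q → 1 ≤ r → r ≤ q →
      ∃ q' : ℕ, R ((k - 1) * m + r) k q') :
    ∀ k : ℕ, 2 ≤ k → ∃ N : ℕ, ∀ n : ℕ, N ≤ n → ∃ q : ℕ, R n k q := by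
  intro k hk
  induction k, hk using Nat.le_induction with
  | base => exact ⟨3, h2⟩
  | succ k hk ih =>
    obtain ⟨M, hM⟩ := ih
    exact exists_forall_ge_succ hAR hAS hk hM
end
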